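/- arXiv:2312.06504 — 7 statements merged into one kernel-verified Lean document; each statement's English description precedes it below -/
import Mathlib

section
/- Let n be a positive odd integer, t a positive integer with t dividing 3, and r the multiplicative order of 4 modulo tn. Then tn divides 2^(2j-1)+1 for some j with 1 ≤ j ≤ r if and only if for every s coprime-compatible element (i.e., every s ≡ 1 mod t with s in {kt+1 : 0 ≤ k ≤ n-1}), there exists an integer i with 0 ≤ i < r such that 4^i · s ≡ -2s (mod tn). -/
/-- Lemma 3.2: `tn ∣ 2^(2j-1)+1` for some `1 ≤ j ≤ r` iff every cyclotomic coset of an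
element of `Ω_a = {kt+1 : 0 ≤ k ≤ n-1}` is fixed by the multiplier `μ₋₂`. -/
theorem duadic_no_splitting_iff (n t r : ℕ) (hn : 0 < n) (hodd : Odd n) (ht : t ∣ 3)
    (hr : r = orderOf (4 : ZMod (t * n))) :
    (∃ j, 1 ≤ j ∧ j ≤ r ∧ t * n ∣ 2 ^ (2 * j - 1) + 1) ↔
      ∀ s : ℕ, (∃ k ≤ n - 1, s = k * t + 1) →
        ∃ i < r, (4 : ZMod (t * n)) ^ i * (s : ZMod (t * n)) = -2 * (s : ZMod (t * n)) := by
  have ht13 : t = 1 ∨ t = 3 := (Nat.prime_three).eq_one_or_self_of_dvd t ht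
  have htn : t * n ≠ 0 := by rcases ht13 with rfl | rfl <;> omega
  haveI : NeZero (t * n) := ⟨htn⟩
  have hoddtn : Odd (t * n) := by
    rcases ht13 with rfl | rfl
    · simpa using hodd
    · exact Odd.mul (by decide) hodd
  have h2unit : IsUnit (2 : ZMod (t * n)) := by
    rw [show ((2 : ZMod (t * n)) = ((2 : ℕ) : ZMod (t * n))) by norm_num,
      ZMod.isUnit_iff_coprime]
    exact (Nat.Prime.coprime_iff_not_dvd Nat.prime_two).mpr
      (by rw [Nat.two_dvd_ne_zero, Nat.odd_iff.mp hoddtn])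
  constructor
  · rintro ⟨j, hj1, hjr, hdvd⟩ s hs
    have hrpos : 0 < r := lt_of_lt_of_le hj1 hjr
    have h0 : ((2 ^ (2 * j - 1) + 1 : ℕ) : ZMod (t * n)) = 0 :=
      (ZMod.natCast_eq_zero_iff _ _).mpr hdvd
    push_cast at h0
    have h2 : (2 : ZMod (t * n)) ^ (2 * j - 1) = -1 := by linear_combination h0
    have h4j : (4 : ZMod (t * n)) ^ j = -2 := by
      have h4 : (4 : ZMod (t * n)) = 2 ^ 2 := by norm_num
      rw [h4, ← pow_mul, show 2 * j = (2 * j - 1) + 1 by omega, pow_succ, h2]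
      ring
    have h4r : (4 : ZMod (t * n)) ^ r = 1 := by rw [hr]; exact pow_orderOf_eq_one _
    have hmod : (4 : ZMod (t * n)) ^ (j % r) = (4 : ZMod (t * n)) ^ j := by
      conv_rhs => rw [← Nat.mod_add_div j r]
      rw [pow_add, pow_mul, h4r, one_pow, mul_one]
    exact ⟨j % r, Nat.mod_lt _ hrpos, by rw [hmod, h4j]⟩
  · intro h
    obtain ⟨i, hir, hi⟩ := h 1 ⟨0, Nat.zero_le _, by ring⟩
    simp only [Nat.cast_one, mul_one] at hi
    rcases Nat.eq_zero_or_pos i with rfl | hipos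
    · simp only [pow_zero] at hi
      have h3 : ((3 : ℕ) : ZMod (t * n)) = 0 := by push_cast; linear_combination hi
      have hd3 : t * n ∣ 3 := (ZMod.natCast_eq_zero_iff _ _).mp h3
      have h41 : (4 : ZMod (t * n)) = 1 := by
        push_cast at h3; linear_combination h3
      have hr1 : r = 1 := by rw [hr, h41, orderOf_one]
      exact ⟨1, le_refl _, by omega, by simpa using hd3⟩
    · refine ⟨i, hipos, le_of_lt hir, ?_⟩
      have h4i : (2 : ZMod (t * n)) ^ (2 * i) = -2 := by
        have h4 : (4 : ZMod (t * n)) = 2 ^ 2 := by norm_num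
        rw [pow_mul, ← h4, hi]
      have hkey : (2 : ZMod (t * n)) * 2 ^ (2 * i - 1) = 2 * (-1) := by
        rw [← pow_succ', show 2 * i - 1 + 1 = 2 * i by omega, h4i]
        ring
      have hcancel : (2 : ZMod (t * n)) ^ (2 * i - 1) = -1 :=
        h2unit.mul_left_cancel hkey
      have hz : ((2 ^ (2 * i - 1) + 1 : ℕ) : ZMod (t * n)) = 0 := by
        push_cast [hcancel]; ring
      exact (ZMod.natCast_eq_zero_iff _ _).mp hz
end

section
/- Let n be a positive odd integer, t a positive integer dividing 3, r the multiplicative order of 4 modulo tn, and s an integer with gcd(n, s) = m. Then there exists an integer i ≥ 0 with 4^i · s ≡ -2s (mod tn) if and only if t·(n/m) divides 2^(2j-1)+1 for some integer j with 1 ≤ j ≤ r. -/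
/-- `3 ∣ 2^(2j-1)+1` for all `j ≥ 1`. -/
lemma three_dvd_aux (j : ℕ) (hj : 1 ≤ j) : 3 ∣ 2 ^ (2 * j - 1) + 1 := by
  have h : 2 * j - 1 = 2 * (j - 1) + 1 := by omega
  rw [h, pow_succ, pow_mul]
  have h4 : (2 ^ 2 : ℕ) ^ (j - 1) % 3 = 1 := by
    rw [Nat.pow_mod]; simp
  omega

/-- `4^j + 2 = 2 * (2^(2j-1) + 1)` for `j ≥ 1`. -/
lemma four_pow_add_two (j : ℕ) (hj : 1 ≤ j) :
    (4 : ℕ) ^ j + 2 = 2 * (2 ^ (2 * j - 1) + 1) := by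
  have h : (2 * j - 1) + 1 = 2 * j := by omega
  calc (4 : ℕ) ^ j + 2 = 2 ^ (2 * j) + 2 := by
        rw [show (4 : ℕ) = 2 ^ 2 from rfl, ← pow_mul]
    _ = 2 ^ ((2 * j - 1) + 1) + 2 := by rw [h]
    _ = 2 * (2 ^ (2 * j - 1) + 1) := by rw [pow_succ]; ring

/-- Lemma 3.3: the cyclotomic coset of `s` modulo `tn` is fixed by `μ₋₂` iff
`t·(n/m) ∣ 2^(2j-1)+1` for some `1 ≤ j ≤ r`, where `m = gcd(n,s)`. -/
theorem coset_fixed_iff (n t r s m : ℕ) (hn : 0 < n) (hodd : Odd n) (ht : t ∣ 3)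
    (hr : r = orderOf (4 : ZMod (t * n))) (hm : m = Nat.gcd n s) :
    (∃ i : ℕ, (4 : ZMod (t * n)) ^ i * (s : ZMod (t * n)) = -2 * (s : ZMod (t * n))) ↔
      ∃ j, 1 ≤ j ∧ j ≤ r ∧ t * (n / m) ∣ 2 ^ (2 * j - 1) + 1 := by
  set N := t * n with hN
  set g := Nat.gcd N s with hg
  set K := N / g with hK
  have ht1 : t = 1 ∨ t = 3 := Nat.prime_three.eq_one_or_self_of_dvd t ht
  have htpos : 0 < t := by rcases ht1 with h | h <;> omega
  have hNpos : 0 < N := Nat.mul_pos htpos hn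
  haveI : NeZero N := ⟨hNpos.ne'⟩
  have hoddt : Odd t := by rcases ht1 with h | h <;> subst h <;> decide
  have hoddN : Odd N := Nat.odd_mul.2 ⟨hoddt, hodd⟩
  have hgdvdN : g ∣ N := Nat.gcd_dvd_left _ _
  have hgdvds : g ∣ s := Nat.gcd_dvd_right _ _
  have hgpos : 0 < g := Nat.gcd_pos_of_pos_left _ hNpos
  have hKpos : 0 < K := Nat.div_pos (Nat.le_of_dvd hNpos hgdvdN) hgpos
  haveI : NeZero K := ⟨hKpos.ne'⟩
  have hKdvdN : K ∣ N := Nat.div_dvd_of_dvd hgdvdN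
  have hNKg : N = K * g := (Nat.div_mul_cancel hgdvdN).symm
  have hKodd : Odd K := by
    rcases Nat.even_or_odd K with he | ho
    · exfalso
      have h2 : 2 ∣ N := (he.two_dvd).trans hKdvdN
      rw [Nat.odd_iff] at hoddN
      omega
    · exact ho
  have hmn : m ∣ n := hm ▸ Nat.gcd_dvd_left _ _
  have hms : m ∣ s := hm ▸ Nat.gcd_dvd_right _ _
  have hmpos : 0 < m := hm ▸ Nat.gcd_pos_of_pos_left _ hn
  have hmg : m ∣ g := Nat.dvd_gcd (hmn.trans (dvd_mul_left n t)) hms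
  -- translation to divisibility in ℕ
  have key1 : ∀ i : ℕ, ((4 : ZMod N) ^ i * (s : ZMod N) = -2 * (s : ZMod N)) ↔
      N ∣ (4 ^ i + 2) * s := by
    intro i
    rw [← ZMod.natCast_eq_zero_iff]
    constructor
    · intro h
      push_cast
      linear_combination h
    · intro h
      push_cast at h
      linear_combination h
  have key2 : ∀ a : ℕ, (N ∣ a * s ↔ K ∣ a) := by
    intro a
    constructor
    · intro h
      have hs : s = g * (s / g) := (Nat.mul_div_cancel' hgdvds).symm
      rw [hNKg, hs] at h
      have h' : K * g ∣ a * (s / g) * g := by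
        calc K * g ∣ a * (g * (s / g)) := h
          _ = a * (s / g) * g := by ring
      have h2 : K ∣ a * (s / g) := (Nat.mul_dvd_mul_iff_right hgpos).1 h'
      exact (Nat.coprime_div_gcd_div_gcd (hg ▸ hgpos)).dvd_of_dvd_mul_right h2
    · intro h
      rw [hNKg]
      exact mul_dvd_mul h hgdvds
  -- 4^r = 1 in ZMod K
  have h4rN : (4 : ZMod N) ^ r = 1 := by rw [hr]; exact pow_orderOf_eq_one _
  have h4rK : (4 : ZMod K) ^ r = 1 := by
    have := congrArg (ZMod.castHom hKdvdN (ZMod K)) h4rN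
    simp only [map_pow, map_one, map_ofNat] at this
    exact this
  -- r ≥ 1
  have hrpos : 0 < r := by
    have hc : Nat.Coprime 4 N := Nat.Coprime.pow_left 2 (hoddN.coprime_two_right.symm)
    have hu : IsUnit ((4 : ℕ) : ZMod N) := (ZMod.isUnit_iff_coprime 4 N).2 hc
    obtain ⟨u, hu'⟩ := hu
    have : (4 : ZMod N) = (u : ZMod N) := by rw [hu']; norm_num
    rw [hr, this, orderOf_units]
    exact orderOf_pos u
  -- cast lemma in ZMod K
  have castK : ∀ i : ℕ, (K ∣ 4 ^ i + 2 ↔ (4 : ZMod K) ^ i = -2) := by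
    intro i
    rw [← ZMod.natCast_eq_zero_iff]
    constructor
    · intro h
      push_cast at h
      linear_combination h
    · intro h
      push_cast
      linear_combination h
  -- index reduction
  have reduce : (∃ i : ℕ, (4 : ZMod K) ^ i = -2) →
      ∃ j, 1 ≤ j ∧ j ≤ r ∧ (4 : ZMod K) ^ j = -2 := by
    rintro ⟨i, hi⟩
    have hmod : (4 : ZMod K) ^ (i % r) = -2 := by
      conv_lhs at hi => rw [← Nat.div_add_mod i r]
      rwa [pow_add, pow_mul, h4rK, one_pow, one_mul] at hi
    rcases Nat.eq_zero_or_pos (i % r) with h0 | hpos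
    · refine ⟨r, hrpos, le_refl r, ?_⟩
      rw [h0, pow_zero] at hmod
      rw [h4rK, hmod]
    · exact ⟨i % r, hpos, (Nat.mod_lt _ hrpos).le, hmod⟩
  -- conversion between 4^j+2 and 2^(2j-1)+1
  have hcop2K : Nat.Coprime K 2 := hKodd.coprime_two_right
  have split : ∀ j : ℕ, 1 ≤ j → (K ∣ 4 ^ j + 2 ↔ K ∣ 2 ^ (2 * j - 1) + 1) := by
    intro j hj
    rw [four_pow_add_two j hj]
    constructor
    · intro h
      exact hcop2K.dvd_of_dvd_mul_left h
    · intro h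
      exact Dvd.dvd.mul_left h 2
  -- bridge between K and t*(n/m)
  have htnm : t * (n / m) = N / m := (Nat.mul_div_assoc t hmn).symm
  have hgu : g = m * (g / m) := (Nat.mul_div_cancel' hmg).symm
  set u := g / m with hu
  have hut : u ∣ t := by
    have hgtm : g ∣ t * m := by
      have h1 : g ∣ Nat.gcd (t * n) (t * s) :=
        Nat.dvd_gcd (Nat.gcd_dvd_left _ _) (hgdvds.trans (dvd_mul_left s t))
      rwa [Nat.gcd_mul_left, ← hm] at h1
    have h2 : m * u ∣ m * t := by rw [← hgu, mul_comm m t]; exact hgtm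
    exact (Nat.mul_dvd_mul_iff_left hmpos).1 h2
  have hNmu : N / m = u * K := by
    have hNm : N = m * (u * K) := by rw [hNKg]; nth_rewrite 1 [hgu]; ring
    rw [hNm, Nat.mul_div_cancel_left _ hmpos]
  have hbridge : ∀ x : ℕ, 3 ∣ x → (K ∣ x ↔ t * (n / m) ∣ x) := by
    intro x h3x
    rw [htnm, hNmu]
    rcases Nat.prime_three.eq_one_or_self_of_dvd u (hut.trans ht) with hu1 | hu3
    · rw [hu1, one_mul]
    · have ht3 : t = 3 := by
        rcases ht1 with h | h
        · have h1 : u = 1 := Nat.eq_one_of_dvd_one (h ▸ hut)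
          omega
        · exact h
      have hnot3K : ¬ 3 ∣ K := by
        intro h3K
        obtain ⟨c, hc⟩ := h3K
        have h3g : 3 * g ∣ N := ⟨c, by rw [hNKg, hc]; ring⟩
        have hgn : g ∣ n := by
          have : 3 * g ∣ 3 * n := by rwa [hN, ht3] at h3g
          exact (Nat.mul_dvd_mul_iff_left (by norm_num : 0 < 3)).1 this
        have hgm : g ∣ m := hm ▸ Nat.dvd_gcd hgn hgdvds
        have hgem : g = m := Nat.dvd_antisymm hgm hmg
        rw [hu3] at hgu
        omega
      have hcop3K : Nat.Coprime 3 K := (Nat.prime_three.coprime_iff_not_dvd).2 hnot3K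
      rw [hu3]
      constructor
      · intro hKx
        exact hcop3K.mul_dvd_of_dvd_of_dvd h3x hKx
      · intro h
        exact (dvd_mul_left K 3).trans h
  -- finish
  constructor
  · rintro ⟨i, hi⟩
    have hdvd : K ∣ 4 ^ i + 2 := (key2 _).1 ((key1 i).1 hi)
    obtain ⟨j, hj1, hjr, hje⟩ := reduce ⟨i, (castK i).1 hdvd⟩
    refine ⟨j, hj1, hjr, ?_⟩
    exact (hbridge _ (three_dvd_aux j hj1)).1 ((split j hj1).1 ((castK j).2 hje))
  · rintro ⟨j, hj1, hjr, hdvd⟩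
    refine ⟨j, (key1 j).2 ((key2 _).2 ?_)⟩
    exact (split j hj1).2 ((hbridge _ (three_dvd_aux j hj1)).2 hdvd)
end

section
/- Let n = 3^i · n₁ with i ≥ 1 and n₁ odd, n₁ ≡ 1 (mod 3). Then the 4-cyclotomic coset Z(n₁) modulo 3n has cardinality 3^i; that is, the smallest positive integer k with 4^k · n₁ ≡ n₁ (mod 3n) is k = 3^i. -/
/-- `4^(3^j) = 1 + 3^(j+1)·m` with `m ≡ 1 (mod 3)`. -/
lemma aux_pow_four (j : ℕ) : ∃ m : ℕ, 4 ^ (3 ^ j) = 1 + 3 ^ (j + 1) * m ∧ m % 3 = 1 := by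
  induction j with
  | zero => exact ⟨1, by norm_num⟩
  | succ j ih =>
    obtain ⟨m, hm, hm3⟩ := ih
    refine ⟨m + 3 * (3 ^ j * m ^ 2 + 3 ^ (2 * j) * m ^ 3), ?_, by omega⟩
    have : 4 ^ (3 ^ (j + 1)) = (4 ^ (3 ^ j)) ^ 3 := by
      rw [← pow_mul, pow_succ]
    rw [this, hm]
    ring

/-- Binomial truncation: `(1+x)^t = 1 + t·x + c·x²` for some `c`. -/
lemma aux_binom (t : ℕ) (x : ℤ) : ∃ c : ℤ, (1 + x) ^ t = 1 + t * x + c * x ^ 2 := by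
  induction t with
  | zero => exact ⟨0, by ring⟩
  | succ t ih =>
    obtain ⟨c, hc⟩ := ih
    refine ⟨c + t + c * x, ?_⟩
    rw [pow_succ, hc]
    push_cast
    ring

lemma aux_order (i k : ℕ) : ((3 : ℤ) ^ (i + 1) ∣ 4 ^ k - 1) ↔ 3 ^ i ∣ k := by
  rcases Nat.eq_zero_or_pos k with rfl | hk
  · simp
  constructor
  · intro h
    obtain ⟨v, t, ht, rfl⟩ := Nat.exists_eq_pow_mul_and_not_dvd hk.ne' 3 (by norm_num)
    by_contra hvi
    have hvi' : v < i := by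
      by_contra hle
      exact hvi (dvd_mul_of_dvd_left (pow_dvd_pow 3 (by omega)) t)
    obtain ⟨m, hm, hm3⟩ := aux_pow_four v
    obtain ⟨c, hc⟩ := aux_binom t ((3 : ℤ) ^ (v + 1) * m)
    have h4 : (4 : ℤ) ^ (3 ^ v * t) = ((4 : ℤ) ^ (3 ^ v)) ^ t := by rw [← pow_mul]
    have hm' : (4 : ℤ) ^ (3 ^ v) = 1 + (3 : ℤ) ^ (v + 1) * m := by
      exact_mod_cast congrArg (Nat.cast : ℕ → ℤ) hm
    have hdvd2 : (3 : ℤ) ^ (v + 2) ∣ 4 ^ (3 ^ v * t) - 1 :=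
      dvd_trans (pow_dvd_pow 3 (by omega)) h
    rw [h4, hm', hc] at hdvd2
    have hfac : (1 : ℤ) + t * (3 ^ (v + 1) * m) + c * (3 ^ (v + 1) * m) ^ 2 - 1
        = 3 ^ (v + 1) * (t * m + 3 ^ (v + 1) * (c * m ^ 2)) := by ring
    rw [hfac, pow_succ' (3 : ℤ) (v + 1), mul_comm (3 : ℤ) ((3:ℤ) ^ (v + 1))] at hdvd2
    have h3dvd : (3 : ℤ) ∣ t * m + 3 ^ (v + 1) * (c * m ^ 2) :=
      (mul_dvd_mul_iff_left (a := (3 : ℤ) ^ (v + 1)) (by positivity)).mp hdvd2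
    have h3m : (3 : ℤ) ∣ t * m := by
      have : (3 : ℤ) ∣ 3 ^ (v + 1) * (c * m ^ 2) :=
        dvd_mul_of_dvd_left (dvd_pow_self 3 (by omega)) _
      exact (dvd_add_right this).mp (by rwa [add_comm] at h3dvd)
    have : (3 : ℤ) ∣ t ∨ (3 : ℤ) ∣ m := (Int.prime_three.dvd_mul.mp h3m)
    rcases this with h | h
    · exact ht (by exact_mod_cast h)
    · have : (3 : ℕ) ∣ m := by exact_mod_cast h
      omega
  · rintro ⟨t, rfl⟩
    obtain ⟨m, hm, -⟩ := aux_pow_four i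
    have hm' : (4 : ℤ) ^ (3 ^ i) = 1 + (3 : ℤ) ^ (i + 1) * m := by
      exact_mod_cast congrArg (Nat.cast : ℕ → ℤ) hm
    have : (4 : ℤ) ^ (3 ^ i * t) = ((1 : ℤ) + 3 ^ (i + 1) * m) ^ t := by
      rw [← hm', pow_mul]
    rw [this]
    obtain ⟨c, hc⟩ := aux_binom t ((3 : ℤ) ^ (i + 1) * m)
    rw [hc]
    exact ⟨t * m + c * (3 ^ (i + 1) * m ^ 2), by ring⟩

/-- Proposition 3.4 Part (3): for `n = 3^i·n₁` with `i ≥ 1`, `n₁` odd and `n₁ ≡ 1 (mod 3)`,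
the 4-cyclotomic coset `Z(n₁)` modulo `3n` has cardinality `3^i`: the least positive `k` with
`4^k·n₁ ≡ n₁ (mod 3n)` is `3^i`. -/
theorem coset_card_eq_three_pow (i n₁ n : ℕ) (hi : 1 ≤ i) (hodd : Odd n₁)
    (h3 : n₁ % 3 = 1) (hn : n = 3 ^ i * n₁) :
    IsLeast {k : ℕ | 0 < k ∧
        (4 : ZMod (3 * n)) ^ k * (n₁ : ZMod (3 * n)) = (n₁ : ZMod (3 * n))}
      (3 ^ i) := by
  have hn₁ : 0 < n₁ := by omega
  have hN : ((3 * n : ℕ) : ℤ) = 3 ^ (i + 1) * n₁ := by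
    subst hn; push_cast; ring
  have key : ∀ k : ℕ, ((4 : ZMod (3 * n)) ^ k * (n₁ : ZMod (3 * n)) = (n₁ : ZMod (3 * n)))
      ↔ 3 ^ i ∣ k := by
    intro k
    have cast1 : (4 : ZMod (3 * n)) ^ k * (n₁ : ZMod (3 * n))
        = (((4 ^ k * n₁ : ℤ)) : ZMod (3 * n)) := by push_cast; ring
    have cast2 : ((n₁ : ℕ) : ZMod (3 * n)) = (((n₁ : ℤ)) : ZMod (3 * n)) := by push_cast; rfl
    rw [cast1, cast2, ZMod.intCast_eq_intCast_iff, Int.modEq_iff_dvd]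
    have heq : (n₁ : ℤ) - 4 ^ k * n₁ = -((4 ^ k - 1) * n₁) := by ring
    rw [heq, hN, dvd_neg]
    rw [mul_dvd_mul_iff_right (by exact_mod_cast hn₁.ne' : (n₁ : ℤ) ≠ 0)]
    exact aux_order i k
  constructor
  · exact ⟨pow_pos (by norm_num) i, (key _).mpr dvd_rfl⟩
  · rintro k ⟨hk0, hk⟩
    exact Nat.le_of_dvd hk0 ((key k).mp hk)
end

section
/- Let n = 3^i · n₁ with i ≥ 1, n₁ odd, n₁ ≡ 1 (mod 3). For any positive integer m with 1 ≤ m ≤ 3^(i+1) - 1 and m ≡ 1 (mod 3), the 4-cyclotomic cosets modulo 3n satisfy Z(m·n₁) = Z(n₁); that is, there exists ℓ ≥ 0 with 4^ℓ · n₁ ≡ m·n₁ (mod 3n). -/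
/-- Binomial approximation: `(1+x)^t = 1 + t*x + x^2*e` for some `e`. -/
lemma aux_pow_one_add (x : ℤ) : ∀ t : ℕ, ∃ e : ℤ, (1 + x) ^ t = 1 + t * x + x ^ 2 * e := by
  intro t
  induction t with
  | zero => exact ⟨0, by ring⟩
  | succ t ih =>
      obtain ⟨e, he⟩ := ih
      refine ⟨e + t + x * e, ?_⟩
      have h : (1 + x) ^ (t + 1) = (1 + x) ^ t * (1 + x) := by ring
      rw [h, he]
      push_cast
      ring

/-- `4^(3^k) = 1 + 3^(k+1)*u` with `3 ∤ u`. -/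
lemma aux_four_pow : ∀ k : ℕ, ∃ u : ℤ, (4 : ℤ) ^ (3 ^ k) = 1 + 3 ^ (k + 1) * u ∧ ¬ (3 ∣ u) := by
  intro k
  induction k with
  | zero => exact ⟨1, by norm_num, by decide⟩
  | succ k ih =>
      obtain ⟨u, hu, hu3⟩ := ih
      refine ⟨u + 3 ^ (k + 1) * u ^ 2 + 3 ^ (2 * k + 1) * u ^ 3, ?_, ?_⟩
      · have h1 : (4 : ℤ) ^ (3 ^ (k + 1)) = ((4 : ℤ) ^ (3 ^ k)) ^ 3 := by
          rw [← pow_mul, ← pow_succ]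
        rw [h1, hu]
        ring
      · intro h
        apply hu3
        have h2 : (3 : ℤ) ∣ 3 ^ (k + 1) * u ^ 2 + 3 ^ (2 * k + 1) * u ^ 3 := by
          refine dvd_add (Dvd.dvd.mul_right ?_ _) (Dvd.dvd.mul_right ?_ _) <;>
            exact dvd_pow_self 3 (Nat.succ_ne_zero _)
        omega

/-- Main number-theoretic lemma: every `m ≡ 1 (mod 3)` is a power of 4 mod `3^(k+1)`. -/
lemma aux_main (k : ℕ) : ∀ m : ℤ, m % 3 = 1 → ∃ ℓ : ℕ, (3:ℤ) ^ (k + 1) ∣ 4 ^ ℓ - m := by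
  induction k with
  | zero =>
      intro m hm
      exact ⟨0, by omega⟩
  | succ k ih =>
      intro m hm
      obtain ⟨ℓ, c, hc⟩ := ih m hm
      obtain ⟨u, hu, hu3⟩ := aux_four_pow k
      have h4 : (4:ℤ) ^ ℓ % 3 = 1 := by
        have : (4:ℤ) ^ ℓ ≡ 1 ^ ℓ [ZMOD 3] := Int.ModEq.pow ℓ (by decide)
        simpa [Int.ModEq] using this
      -- choose t with t*u ≡ -c (mod 3)
      obtain ⟨t, ht⟩ : ∃ t : ℕ, (3:ℤ) ∣ c + (t : ℤ) * u := by
        have hu' : u % 3 = 1 ∨ u % 3 = 2 := by omega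
        rcases hu' with h | h
        · refine ⟨((-c) % 3).toNat, ?_⟩
          have hnn : (0:ℤ) ≤ (-c) % 3 := Int.emod_nonneg _ (by norm_num)
          obtain ⟨v, hv⟩ : ∃ v : ℤ, u = 3 * v + 1 := ⟨u / 3, by omega⟩
          rw [Int.toNat_of_nonneg hnn, hv]
          have heq : c + (-c) % 3 * (3 * v + 1) = (c + (-c) % 3) + 3 * ((-c) % 3 * v) := by ring
          rw [heq]
          have : (3:ℤ) ∣ c + (-c) % 3 := by omega
          exact dvd_add this ⟨_, rfl⟩
        · refine ⟨(c % 3).toNat, ?_⟩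
          have hnn : (0:ℤ) ≤ c % 3 := Int.emod_nonneg _ (by norm_num)
          obtain ⟨v, hv⟩ : ∃ v : ℤ, u = 3 * v + 2 := ⟨u / 3, by omega⟩
          rw [Int.toNat_of_nonneg hnn, hv]
          have heq : c + c % 3 * (3 * v + 2) = (c + 2 * (c % 3)) + 3 * (c % 3 * v) := by ring
          rw [heq]
          have : (3:ℤ) ∣ c + 2 * (c % 3) := by omega
          exact dvd_add this ⟨_, rfl⟩
      refine ⟨ℓ + t * 3 ^ k, ?_⟩
      obtain ⟨e, he⟩ := aux_pow_one_add ((3:ℤ) ^ (k + 1) * u) t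
      have hsplit : (4:ℤ) ^ (ℓ + t * 3 ^ k) = 4 ^ ℓ * ((4:ℤ) ^ (3 ^ k)) ^ t := by
        rw [pow_add, mul_comm t, pow_mul]
      rw [hsplit, hu, he]
      obtain ⟨d, hd⟩ : ∃ d : ℤ, (4:ℤ) ^ ℓ = 1 + 3 * d := ⟨(4 ^ ℓ) / 3, by omega⟩
      obtain ⟨s, hs⟩ := ht
      have key : (3:ℤ) ∣ c + 4 ^ ℓ * t * u := by
        refine ⟨s + d * (t * u), ?_⟩
        linear_combination hs + ((t:ℤ) * u) * hd
      obtain ⟨w, hw⟩ := key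
      refine ⟨w + 3 ^ k * (4 ^ ℓ * u ^ 2 * e), ?_⟩
      have : (4:ℤ) ^ ℓ * (1 + ↑t * (3 ^ (k + 1) * u) + (3 ^ (k + 1) * u) ^ 2 * e) - m
          = (4 ^ ℓ - m) + 3 ^ (k + 1) * (c + 4 ^ ℓ * t * u) - 3 ^ (k + 1) * c
            + 3 ^ (k + 1 + 1) * (3 ^ k * (4 ^ ℓ * u ^ 2 * e)) := by ring
      rw [this, hc, hw]
      ring

/-- Proposition 3.4 Part (4): for `n = 3^i·n₁` with `i ≥ 1`, `n₁` odd, `n₁ ≡ 1 (mod 3)`,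
and any `1 ≤ m ≤ 3^(i+1)-1` with `m ≡ 1 (mod 3)`, we have `Z(m·n₁) = Z(n₁)` modulo `3n`:
there is `ℓ ≥ 0` with `4^ℓ·n₁ ≡ m·n₁ (mod 3n)`. -/
theorem coset_mul_eq (i n₁ n m : ℕ) (hi : 1 ≤ i) (hodd : Odd n₁) (h3 : n₁ % 3 = 1)
    (hn : n = 3 ^ i * n₁) (hm1 : 1 ≤ m) (hm2 : m ≤ 3 ^ (i + 1) - 1) (hm3 : m % 3 = 1) :
    ∃ ℓ : ℕ, (4 : ZMod (3 * n)) ^ ℓ * (n₁ : ZMod (3 * n)) = ((m * n₁ : ℕ) : ZMod (3 * n)) := by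
  have hm3' : (m : ℤ) % 3 = 1 := by omega
  obtain ⟨ℓ, hdvd⟩ := aux_main i (m : ℤ) hm3'
  refine ⟨ℓ, ?_⟩
  have hdvd2 : ((3 * n : ℕ) : ℤ) ∣ (4 ^ ℓ * n₁ - m * n₁ : ℤ) := by
    have h1 : ((3 * n : ℕ) : ℤ) = 3 ^ (i + 1) * n₁ := by
      push_cast [hn]
      ring
    have h2 : (4 ^ ℓ * n₁ - m * n₁ : ℤ) = (4 ^ ℓ - m) * n₁ := by ring
    rw [h1, h2]
    exact mul_dvd_mul hdvd dvd_rfl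
  have := (ZMod.intCast_zmod_eq_zero_iff_dvd (4 ^ ℓ * n₁ - m * n₁ : ℤ) (3 * n)).mpr hdvd2
  push_cast at this ⊢
  linear_combination this
end

section
/- Let n = 3^i · n₁ with i ≥ 1, gcd(n₁, 3) = 1. For each 0 ≤ ℓ ≤ i-1 and s ∈ {1, 2}, there exists j ≥ 0 with 4^j · (3^ℓ s n₁) ≡ -2 · (3^ℓ s n₁) (mod n), and the 4-cyclotomic coset Z(3^ℓ s n₁) modulo n has cardinality 3^(i-ℓ-1). -/
/-- Sharp 3-adic valuation of `2^(3^t) + 1`. -/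
lemma two_pow_three_pow_add_one (t : ℕ) :
    ∃ c : ℤ, 2 ^ 3 ^ t + 1 = 3 ^ (t + 1) * c ∧ ¬ (3 ∣ c) := by
  induction t with
  | zero => exact ⟨1, by norm_num, by norm_num⟩
  | succ t ih =>
    obtain ⟨c, hc, hc3⟩ := ih
    refine ⟨c * (3 * (3 ^ t * c) ^ 2 - 3 * (3 ^ t * c) + 1), ?_, ?_⟩
    · have h3 : (2 : ℤ) ^ 3 ^ (t + 1) = (2 ^ 3 ^ t) ^ 3 := by
        rw [pow_succ, pow_mul]
      have ha : (2 : ℤ) ^ 3 ^ t = 3 ^ (t + 1) * c - 1 := by linarith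
      rw [h3, ha]
      ring
    · intro h
      rcases (Int.prime_three.dvd_mul).mp h with h | h
      · exact hc3 h
      · have h1 : (3 : ℤ) ∣ 3 * (3 ^ t * c) ^ 2 - 3 * (3 ^ t * c) :=
          ⟨(3 ^ t * c) ^ 2 - (3 ^ t * c), by ring⟩
        have : (3 : ℤ) ∣ 1 := by
          have := dvd_sub h h1
          simpa using this
        norm_num at this

/-- Sharp 3-adic valuation of `4^(3^t) - 1`. -/
lemma four_pow_three_pow_sub_one (t : ℕ) :
    ∃ c : ℤ, 4 ^ 3 ^ t - 1 = 3 ^ (t + 1) * c ∧ ¬ (3 ∣ c) := by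
  obtain ⟨c, hc, hc3⟩ := two_pow_three_pow_add_one t
  refine ⟨c * (2 ^ 3 ^ t - 1), ?_, ?_⟩
  · have h4 : (4 : ℤ) ^ 3 ^ t = (2 ^ 3 ^ t) ^ 2 := by
      have h2 : (4 : ℤ) = 2 ^ 2 := by norm_num
      rw [h2, ← pow_mul, mul_comm, pow_mul]
    have : (4 : ℤ) ^ 3 ^ t - 1 = (2 ^ 3 ^ t + 1) * (2 ^ 3 ^ t - 1) := by
      rw [h4]; ring
    rw [this, hc]; ring
  · intro h
    rcases (Int.prime_three.dvd_mul).mp h with h | h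
    · exact hc3 h
    · have h1 : (3 : ℤ) ∣ 2 ^ 3 ^ t + 1 := by
        rw [hc]; exact Dvd.dvd.mul_right ⟨3 ^ t, by ring⟩ c
      have : (3 : ℤ) ∣ 2 := by
        have := dvd_sub h1 h
        simpa using this
      norm_num at this

lemma order_four (t : ℕ) : orderOf (4 : ZMod (3 ^ (t + 1))) = 3 ^ t := by
  obtain ⟨c, hc, hc3⟩ := four_pow_three_pow_sub_one t
  have h1 : (4 : ZMod (3 ^ (t + 1))) ^ 3 ^ t = 1 := by
    have : (((4 ^ 3 ^ t - 1 : ℤ)) : ZMod (3 ^ (t + 1))) = 0 := by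
      rw [ZMod.intCast_zmod_eq_zero_iff_dvd]
      exact ⟨c, by push_cast; linarith [hc]⟩
    push_cast at this
    linear_combination this
  have hdvd : orderOf (4 : ZMod (3 ^ (t + 1))) ∣ 3 ^ t := orderOf_dvd_of_pow_eq_one h1
  obtain ⟨r, hr, hordr⟩ := (Nat.dvd_prime_pow Nat.prime_three).mp hdvd
  rcases Nat.lt_or_ge r t with hlt | hge
  · exfalso
    have h2 : (4 : ZMod (3 ^ (t + 1))) ^ 3 ^ r = 1 := by
      rw [← hordr]; exact pow_orderOf_eq_one _
    have h3 : ((3 ^ (t + 1) : ℕ) : ℤ) ∣ 4 ^ 3 ^ r - 1 := by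
      rw [← ZMod.intCast_zmod_eq_zero_iff_dvd]
      push_cast
      rw [sub_eq_zero]
      exact_mod_cast h2
    obtain ⟨c', hc', hc3'⟩ := four_pow_three_pow_sub_one r
    rw [hc'] at h3
    push_cast at h3
    have h4 : (3 : ℤ) ^ (r + 2) ∣ 3 ^ (r + 1) * c' :=
      dvd_trans (pow_dvd_pow 3 (by omega)) h3
    have h5 : (3 : ℤ) ∣ c' := by
      have h6 : (3:ℤ) ^ (r+1) * 3 ∣ 3 ^ (r+1) * c' := by
        rw [← pow_succ]; exact h4
      exact (mul_dvd_mul_iff_left (a := (3:ℤ)^(r+1)) (by positivity)).mp h6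
    exact hc3' h5
  · rw [hordr]
    congr 1
    omega

/-- Proposition 3.7 Part (3): for `n = 3^i·n₁` with `i ≥ 1`, `gcd(n₁,3) = 1`, `n₁` odd,
each `0 ≤ ℓ ≤ i-1` and `s ∈ {1,2}`, the coset `Z(3^ℓ·s·n₁)` modulo `n` is fixed by `μ₋₂`
and has cardinality `3^(i-ℓ-1)`. -/
theorem coset_fixed_and_card (i n₁ n : ℕ) (hi : 1 ≤ i) (hodd : Odd n₁)
    (hgcd : Nat.gcd n₁ 3 = 1) (hn : n = 3 ^ i * n₁) (ℓ : ℕ) (hℓ : ℓ ≤ i - 1)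
    (s : ℕ) (hs : s = 1 ∨ s = 2) :
    (∃ j : ℕ, (4 : ZMod n) ^ j * ((3 ^ ℓ * s * n₁ : ℕ) : ZMod n) =
        -2 * ((3 ^ ℓ * s * n₁ : ℕ) : ZMod n)) ∧
      IsLeast {k : ℕ | 0 < k ∧ (4 : ZMod n) ^ k * ((3 ^ ℓ * s * n₁ : ℕ) : ZMod n) =
          ((3 ^ ℓ * s * n₁ : ℕ) : ZMod n)}
        (3 ^ (i - ℓ - 1)) := by
  obtain ⟨mt, hmt⟩ : ∃ mt, i - ℓ = mt + 1 := ⟨i - ℓ - 1, by omega⟩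
  have hℓi : i = ℓ + (mt + 1) := by omega
  have hn₁ : n₁ ≠ 0 := by
    rintro rfl
    have := Nat.odd_iff.mp hodd
    omega
  have hn₁Z : (0 : ℤ) < (n₁ : ℤ) := by exact_mod_cast Nat.pos_of_ne_zero hn₁
  have hnZ : (n : ℤ) = (3 ^ ℓ * n₁) * 3 ^ (mt + 1) := by
    rw [hn, hℓi]; push_cast; ring
  have hred : ∀ X : ℤ, ((n : ℤ) ∣ X * (3 ^ ℓ * (s : ℤ) * (n₁ : ℤ))) ↔
      (3 : ℤ) ^ (mt + 1) ∣ X := by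
    intro X
    have hcop : IsCoprime ((3 : ℤ) ^ (mt + 1)) (s : ℤ) := by
      rcases hs with rfl | rfl
      · simpa using isCoprime_one_right
      · exact IsCoprime.pow_left (show IsCoprime (3 : ℤ) ((2 : ℕ) : ℤ) from
          ⟨1, -1, by norm_num⟩)
    constructor
    · intro h
      rw [hnZ] at h
      have h2 : X * (3 ^ ℓ * (s : ℤ) * (n₁ : ℤ)) = (3 ^ ℓ * (n₁ : ℤ)) * (X * s) := by ring
      rw [h2] at h
      have hne : (3 : ℤ) ^ ℓ * (n₁ : ℤ) ≠ 0 := by positivity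
      exact hcop.dvd_of_dvd_mul_right ((mul_dvd_mul_iff_left hne).mp h)
    · rintro ⟨c, rfl⟩
      rw [hnZ]
      exact ⟨c * s, by ring⟩
  have hcast : ∀ X : ℤ, ((X * (3 ^ ℓ * (s : ℤ) * (n₁ : ℤ)) : ℤ) : ZMod n) = 0 ↔
      (3 : ℤ) ^ (mt + 1) ∣ X := by
    intro X
    rw [ZMod.intCast_zmod_eq_zero_iff_dvd]
    exact hred X
  constructor
  · -- existence of j with 4^j·a = -2·a
    obtain ⟨w, hw⟩ : Odd (3 ^ mt) := Odd.pow ⟨1, by norm_num⟩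
    refine ⟨w + 1, ?_⟩
    have h0 : ((((4 : ℤ) ^ (w + 1) + 2) * (3 ^ ℓ * (s : ℤ) * (n₁ : ℤ)) : ℤ) : ZMod n)
        = 0 := by
      rw [hcast]
      obtain ⟨c, hc, -⟩ := two_pow_three_pow_add_one mt
      refine ⟨2 * c, ?_⟩
      have h4 : (4 : ℤ) ^ (w + 1) = 2 * 2 ^ 3 ^ mt := by
        have h2 : (4 : ℤ) = 2 ^ 2 := by norm_num
        rw [h2, ← pow_mul, show 2 * (w + 1) = 3 ^ mt + 1 by omega, pow_succ]
        ring
      rw [h4]; linarith [hc]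
    rw [← sub_eq_zero]
    push_cast at h0 ⊢
    linear_combination h0
  · have hK : i - ℓ - 1 = mt := by omega
    rw [hK]
    constructor
    · refine ⟨by positivity, ?_⟩
      have h0 : ((((4 : ℤ) ^ 3 ^ mt - 1) * (3 ^ ℓ * (s : ℤ) * (n₁ : ℤ)) : ℤ) : ZMod n)
          = 0 := by
        rw [hcast]
        obtain ⟨c, hc, -⟩ := four_pow_three_pow_sub_one mt
        exact ⟨c, hc⟩
      rw [← sub_eq_zero]
      push_cast at h0 ⊢
      linear_combination h0
    · rintro k ⟨hk0, hk⟩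
      rw [← sub_eq_zero] at hk
      have h0 : ((((4 : ℤ) ^ k - 1) * (3 ^ ℓ * (s : ℤ) * (n₁ : ℤ)) : ℤ) : ZMod n)
          = 0 := by
        push_cast at hk ⊢
        linear_combination hk
      have hdvd : (3 : ℤ) ^ (mt + 1) ∣ (4 : ℤ) ^ k - 1 := (hcast _).mp h0
      have h1 : (4 : ZMod (3 ^ (mt + 1))) ^ k = 1 := by
        have h2 : (((4 : ℤ) ^ k - 1 : ℤ) : ZMod (3 ^ (mt + 1))) = 0 := by
          rw [ZMod.intCast_zmod_eq_zero_iff_dvd]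
          exact_mod_cast hdvd
        push_cast at h2
        linear_combination h2
      exact Nat.le_of_dvd hk0 (order_four mt ▸ orderOf_dvd_of_pow_eq_one h1)
end

section
/- Let n be odd, a ∈ F₄*, and (X, S₁, S₂) a splitting of Ω_a given by a multiplier μ_b. Let C₁, C₂ be the odd-like duadic a-constacyclic codes with defining sets S₁, S₂. If u ∈ C₁ is an odd-like codeword (with respect to X) of minimum odd-like weight d_o, and E is the a-constacyclic code with defining set Ω_a \ X, then d_o² ≥ d(E), where d(E) is the minimum Hamming distance of E. -/
/-- The `a`-constacyclic code of length `n` over `F` with defining set `A ⊆ ℤ/mℤ`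
(where `m = t·n` and `α ∈ K` is a primitive `m`-th root of unity with `αⁿ = a`):
all words `c` whose polynomial `c(x)` vanishes at `α^s` for every `s ∈ A`. -/
def constaCode (F : Type*) [Field F] {K : Type*} [Field K] [Algebra F K]
    (n m : ℕ) (α : K) (A : Finset (ZMod m)) : Submodule F (Fin n → F) where
  carrier := {c | ∀ s ∈ A, ∑ i : Fin n, algebraMap F K (c i) * α ^ (s.val * i.val) = 0}
  zero_mem' := by intro s _; simp
  add_mem' := by
    intro a b ha hb s hs
    simp only [Set.mem_setOf_eq, Pi.add_apply, map_add, add_mul, Finset.sum_add_distrib] at *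
    rw [ha s hs, hb s hs, add_zero]
  smul_mem' := by
    intro c a ha s hs
    simp only [Set.mem_setOf_eq, Pi.smul_apply, smul_eq_mul, map_mul, mul_assoc,
      ← Finset.mul_sum] at *
    rw [ha s hs, mul_zero]

/-- `(X, S₁, S₂)` is a splitting of `Ω ⊆ ℤ/mℤ` given by the multiplier `μ_b`:
the three sets are disjoint nonempty unions of 4-cyclotomic cosets covering `Ω`,
`μ_b` interchanges `S₁` and `S₂`, and `μ_b` fixes every cyclotomic coset in `X`. -/
def IsSplitting (m : ℕ) (b : ℤ) (Ω X S₁ S₂ : Finset (ZMod m)) : Prop :=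
  (∀ s ∈ X, 4 * s ∈ X) ∧ (∀ s ∈ S₁, 4 * s ∈ S₁) ∧ (∀ s ∈ S₂, 4 * s ∈ S₂) ∧
  X.Nonempty ∧ S₁.Nonempty ∧ S₂.Nonempty ∧
  Disjoint X S₁ ∧ Disjoint X S₂ ∧ Disjoint S₁ S₂ ∧
  X ∪ S₁ ∪ S₂ = Ω ∧
  S₁.image (fun x => (b : ZMod m) * x) = S₂ ∧
  S₂.image (fun x => (b : ZMod m) * x) = S₁ ∧
  ∀ s ∈ X, ∃ k : ℕ, (b : ZMod m) * s = 4 ^ k * s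

/-- Theorem 4.4 Part (5), square-root bound: if `u` is an odd-like codeword (w.r.t. `X`)
of the odd-like duadic code `C₁` of minimum odd-like weight, and `E` is the
`a`-constacyclic code with defining set `Ω_a \ X`, then `d(E) ≤ (wt u)² `, i.e. `E`
contains a nonzero word of weight at most `(wt u)²`. -/
theorem odd_weight_sq_ge_min_dist (F K : Type*) [Field F] [Fintype F] [DecidableEq F]
    (hF : Fintype.card F = 4) [Field K] [Algebra F K] (n : ℕ) (hodd : Odd n)
    (a : Fˣ) (t : ℕ) (ht : t = orderOf a) (α : K) (hα : orderOf α = t * n)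
    (hαn : α ^ n = algebraMap F K (a : F)) (b : ℤ) (X S₁ S₂ : Finset (ZMod (t * n)))
    (hsplit : IsSplitting (t * n) b
      ((Finset.range n).image fun k => ((k * t + 1 : ℕ) : ZMod (t * n))) X S₁ S₂)
    (u : Fin n → F) (hu : u ∈ constaCode F n (t * n) α S₁)
    (huodd : ∃ s ∈ X, ∑ i : Fin n, algebraMap F K (u i) * α ^ (s.val * i.val) ≠ 0)
    (humin : ∀ v ∈ constaCode F n (t * n) α S₁,
      (∃ s ∈ X, ∑ i : Fin n, algebraMap F K (v i) * α ^ (s.val * i.val) ≠ 0) →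
        hammingNorm u ≤ hammingNorm v) :
    ∃ w ∈ constaCode F n (t * n) α
        (((Finset.range n).image fun k => ((k * t + 1 : ℕ) : ZMod (t * n))) \ X),
      w ≠ 0 ∧ hammingNorm w ≤ hammingNorm u ^ 2 := by
  classical
  obtain ⟨hX4, hS14, hS24, hXne, hS1ne, hS2ne, hdXS1, hdXS2, hdS12, hunion, hb12, hb21, hbX⟩ :=
    hsplit
  have hn : 0 < n := hodd.pos
  have ht0 : 0 < t := ht ▸ orderOf_pos a
  have hm : 0 < t * n := Nat.mul_pos ht0 hn
  haveI : NeZero (t * n) := ⟨hm.ne'⟩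
  set Ω : Finset (ZMod (t * n)) :=
    (Finset.range n).image (fun k => ((k * t + 1 : ℕ) : ZMod (t * n))) with hΩdef
  set φ : F →+* K := (algebraMap F K : F →+* K) with hφdef
  set aK : K := φ ((a : Fˣ) : F) with haKdef
  have hα1 : α ^ (t * n) = 1 := by rw [← hα]; exact pow_orderOf_eq_one α
  have Lred : ∀ x : ℕ, α ^ x = α ^ (x % (t * n)) := by
    intro x
    conv_lhs => rw [← Nat.div_add_mod x (t * n)]
    rw [pow_add, pow_mul, hα1, one_pow, one_mul]
  have Lmod : ∀ {x y : ℕ}, x ≡ y [MOD t * n] → α ^ x = α ^ y := by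
    intro x y h
    rw [Lred x, Lred y, h]
  -- (A): at points of Ω, α^(s.val * n) = aK
  have hΩn : ∀ s ∈ Ω, α ^ (s.val * n) = aK := by
    intro s hs
    obtain ⟨k, -, rfl⟩ := Finset.mem_image.1 hs
    have h1 : (((k * t + 1 : ℕ) : ZMod (t * n))).val ≡ k * t + 1 [MOD t * n] := by
      rw [ZMod.val_natCast]; exact Nat.mod_modEq _ _
    rw [Lmod (h1.mul_right n), show (k * t + 1) * n = t * n * k + n by ring,
      pow_add, pow_mul, hα1, one_pow, one_mul, hαn]
  -- (L1): exponent reduction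
  have L1 : ∀ s ∈ Ω, ∀ e : ℕ, α ^ (s.val * e) = aK ^ (e / n) * α ^ (s.val * (e % n)) := by
    intro s hs e
    conv_lhs => rw [← Nat.div_add_mod e n]
    rw [Nat.mul_add, pow_add, show s.val * (n * (e / n)) = s.val * n * (e / n) by ring,
      pow_mul, hΩn s hs]
  -- the multiplier as a natural number
  set B : ℕ := ((b : ZMod (t * n))).val with hBdef
  -- the maps on coordinates
  set π : Fin n → Fin n := fun i => ⟨(B * i.val) % n, Nat.mod_lt _ hn⟩ with hπdef
  set σ : Fin n × Fin n → Fin n :=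
    fun p => ⟨(p.1.val + p.2.val) % n, Nat.mod_lt _ hn⟩ with hσdef
  -- μ_b u
  set u' : Fin n → F :=
    fun j => ∑ i ∈ Finset.univ.filter (fun i => π i = j),
      u i * ((a : Fˣ) : F) ^ (B * i.val / n) with hu'def
  -- the product word
  set w : Fin n → F :=
    fun k => ∑ p ∈ Finset.univ.filter (fun p => σ p = k),
      u p.1 * u' p.2 * ((a : Fˣ) : F) ^ ((p.1.val + p.2.val) / n) with hwdef
  -- evaluation of u'
  have Lu' : ∀ s ∈ Ω, ∑ j : Fin n, φ (u' j) * α ^ (s.val * j.val)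
      = ∑ i : Fin n, φ (u i) * α ^ ((((b : ZMod (t * n)) * s)).val * i.val) := by
    intro s hs
    have step1 : ∀ j : Fin n, φ (u' j) * α ^ (s.val * j.val)
        = ∑ i ∈ Finset.univ.filter (fun i => π i = j),
            φ (u i) * (aK ^ (B * i.val / n) * α ^ (s.val * ((B * i.val) % n))) := by
      intro j
      rw [hu'def, map_sum, Finset.sum_mul]
      refine Finset.sum_congr rfl ?_
      intro i hi
      have hij : (B * i.val) % n = j.val := by
        have := (Finset.mem_filter.1 hi).2
        exact congrArg Fin.val this
      rw [map_mul, map_pow, ← hij]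
      ring
    rw [Finset.sum_congr rfl (fun j _ => step1 j),
      Finset.sum_fiberwise Finset.univ π
        (fun i => φ (u i) * (aK ^ (B * i.val / n) * α ^ (s.val * ((B * i.val) % n))))]
    refine Finset.sum_congr rfl ?_
    intro i _
    rw [← L1 s hs (B * i.val)]
    congr 1
    refine Lmod (Nat.ModEq.symm ?_)
    have h1 : (((b : ZMod (t * n)) * s)).val ≡ B * s.val [MOD t * n] := by
      rw [ZMod.val_mul]; exact Nat.mod_modEq _ _
    calc (((b : ZMod (t * n)) * s)).val * i.val
        ≡ B * s.val * i.val [MOD t * n] := h1.mul_right i.val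
      _ = s.val * (B * i.val) := by ring
  -- evaluation of w
  have Lw : ∀ s ∈ Ω, ∑ k : Fin n, φ (w k) * α ^ (s.val * k.val)
      = (∑ i : Fin n, φ (u i) * α ^ (s.val * i.val))
        * (∑ j : Fin n, φ (u' j) * α ^ (s.val * j.val)) := by
    intro s hs
    have step1 : ∀ k : Fin n, φ (w k) * α ^ (s.val * k.val)
        = ∑ p ∈ Finset.univ.filter (fun p => σ p = k),
            φ (u p.1) * φ (u' p.2)
              * (aK ^ ((p.1.val + p.2.val) / n)
                * α ^ (s.val * ((p.1.val + p.2.val) % n))) := by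
      intro k
      rw [hwdef, map_sum, Finset.sum_mul]
      refine Finset.sum_congr rfl ?_
      intro p hp
      have hpk : (p.1.val + p.2.val) % n = k.val := by
        have := (Finset.mem_filter.1 hp).2
        exact congrArg Fin.val this
      rw [map_mul, map_mul, map_pow, ← hpk]
      ring
    rw [Finset.sum_congr rfl (fun k _ => step1 k),
      Finset.sum_fiberwise Finset.univ σ
        (fun p : Fin n × Fin n => φ (u p.1) * φ (u' p.2)
          * (aK ^ ((p.1.val + p.2.val) / n) * α ^ (s.val * ((p.1.val + p.2.val) % n)))),
      Finset.sum_mul_sum, Fintype.sum_prod_type]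
    refine Finset.sum_congr rfl fun i _ => Finset.sum_congr rfl fun j _ => ?_
    rw [← L1 s hs (i.val + j.val), Nat.mul_add, pow_add]
    ring
  -- characteristic 2
  have h4 : (4 : F) = 0 := by
    have := FiniteField.cast_card_eq_zero F
    rwa [hF] at this
  have h2 : (2 : F) = 0 := by
    have h22 : (2 : F) * 2 = 4 := by norm_num
    have := mul_self_eq_zero.1 (by rw [h22]; exact h4)
    exact this
  haveI hcF : CharP F 2 := by
    have hdvd : ringChar F ∣ 2 := ringChar.dvd (by exact_mod_cast h2)
    have hprime : (ringChar F).Prime := CharP.char_is_prime F (ringChar F)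
    have : ringChar F = 2 := (Nat.prime_dvd_prime_iff_eq hprime Nat.prime_two).1 hdvd
    exact ringChar.of_eq this
  haveI : CharP K 2 := charP_of_injective_algebraMap (algebraMap F K).injective 2
  haveI : Fact (Nat.Prime 2) := ⟨Nat.prime_two⟩
  -- Frobenius on evaluations
  have L4 : ∀ (s : ZMod (t * n)) (c : Fin n → F),
      ∑ i : Fin n, φ (c i) * α ^ ((((4 : ZMod (t * n)) * s)).val * i.val)
        = (∑ i : Fin n, φ (c i) * α ^ (s.val * i.val)) ^ 4 := by
    intro s c
    have : (4 : ℕ) = 2 ^ 2 := by norm_num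
    rw [this, sum_pow_char_pow]
    refine Finset.sum_congr rfl ?_
    intro i _
    rw [mul_pow, ← map_pow, ← pow_mul]
    have hc : c i ^ 2 ^ 2 = c i := by
      have := FiniteField.pow_card (c i)
      rwa [hF, show (4 : ℕ) = 2 ^ 2 by norm_num] at this
    rw [hc]
    congr 1
    refine Lmod ?_
    have h1 : (((4 : ZMod (t * n)) * s)).val ≡ 4 * s.val [MOD t * n] := by
      rw [ZMod.val_mul, show ((4 : ZMod (t * n))).val = 4 % (t * n) by
        rw [show (4 : ZMod (t * n)) = ((4 : ℕ) : ZMod (t * n)) by push_cast; ring,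
          ZMod.val_natCast]]
      calc (4 % (t * n) * s.val) % (t * n) ≡ 4 % (t * n) * s.val [MOD t * n] :=
            Nat.mod_modEq _ _
        _ ≡ 4 * s.val [MOD t * n] := (Nat.mod_modEq 4 (t * n)).mul_right s.val
    calc (((4 : ZMod (t * n)) * s)).val * i.val ≡ 4 * s.val * i.val [MOD t * n] :=
          h1.mul_right i.val
      _ = s.val * i.val * 2 ^ 2 := by ring
  have L4iter : ∀ (k : ℕ) (s : ZMod (t * n)) (c : Fin n → F),
      ∑ i : Fin n, φ (c i) * α ^ ((((4 : ZMod (t * n)) ^ k * s)).val * i.val)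
        = (∑ i : Fin n, φ (c i) * α ^ (s.val * i.val)) ^ 4 ^ k := by
    intro k
    induction k with
    | zero => intro s c; simp
    | succ k ih =>
      intro s c
      have : (4 : ZMod (t * n)) ^ (k + 1) * s = (4 : ZMod (t * n)) ^ k * ((4 : ZMod (t * n)) * s) := by
        ring
      rw [this, ih ((4 : ZMod (t * n)) * s) c, L4 s c, ← pow_mul, ← pow_succ']
  -- subsets of Ω
  have hXΩ : X ⊆ Ω := by
    rw [← hunion]; exact (Finset.subset_union_left.trans Finset.subset_union_left)
  have hS1Ω : S₁ ⊆ Ω := by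
    rw [← hunion]; exact (Finset.subset_union_right.trans Finset.subset_union_left)
  have hS2Ω : S₂ ⊆ Ω := by
    rw [← hunion]; exact Finset.subset_union_right
  -- u vanishes on S₁
  have hu0 : ∀ s ∈ S₁, ∑ i : Fin n, φ (u i) * α ^ (s.val * i.val) = 0 := hu
  -- w is in the code E
  have hwE : w ∈ constaCode F n (t * n) α (Ω \ X) := by
    intro s hs
    obtain ⟨hsΩ, hsX⟩ := Finset.mem_sdiff.1 hs
    rw [Lw s hsΩ]
    have : s ∈ X ∪ S₁ ∪ S₂ := by rw [hunion]; exact hsΩ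
    rcases Finset.mem_union.1 this with h | hs2
    · rcases Finset.mem_union.1 h with h | hs1
      · exact absurd h hsX
      · rw [hu0 s hs1, zero_mul]
    · rw [Lu' s hsΩ]
      have hbs : (b : ZMod (t * n)) * s ∈ S₁ := by
        rw [← hb21]; exact Finset.mem_image_of_mem _ hs2
      rw [hu0 _ hbs, mul_zero]
  -- w is nonzero
  obtain ⟨s₀, hs₀X, hs₀ne⟩ := huodd
  have hs₀Ω : s₀ ∈ Ω := hXΩ hs₀X
  obtain ⟨k, hk⟩ := hbX s₀ hs₀X
  have hwne : ∑ k' : Fin n, φ (w k') * α ^ (s₀.val * k'.val) ≠ 0 := by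
    rw [Lw s₀ hs₀Ω, Lu' s₀ hs₀Ω, hk, L4iter k s₀ u]
    exact mul_ne_zero hs₀ne (pow_ne_zero _ hs₀ne)
  have hw0 : w ≠ 0 := by
    intro h
    apply hwne
    rw [h]
    simp
  -- weight bounds
  have hwt1 : hammingNorm u' ≤ hammingNorm u := by
    have hsub : (Finset.univ.filter (fun j => u' j ≠ 0))
        ⊆ (Finset.univ.filter (fun i => u i ≠ 0)).image π := by
      intro j hj
      have hj' : u' j ≠ 0 := (Finset.mem_filter.1 hj).2
      obtain ⟨i, hi, hine⟩ := Finset.exists_ne_zero_of_sum_ne_zero hj'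
      have hui : u i ≠ 0 := fun h => hine (by rw [h, zero_mul])
      refine Finset.mem_image.2 ⟨i, Finset.mem_filter.2 ⟨Finset.mem_univ _, hui⟩, ?_⟩
      exact (Finset.mem_filter.1 hi).2
    calc hammingNorm u' ≤ ((Finset.univ.filter (fun i => u i ≠ 0)).image π).card :=
          Finset.card_le_card hsub
      _ ≤ (Finset.univ.filter (fun i => u i ≠ 0)).card := Finset.card_image_le
      _ = hammingNorm u := rfl
  have hwt2 : hammingNorm w ≤ hammingNorm u * hammingNorm u' := by
    have hsub : (Finset.univ.filter (fun k' => w k' ≠ 0))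
        ⊆ ((Finset.univ.filter (fun i => u i ≠ 0))
            ×ˢ (Finset.univ.filter (fun j => u' j ≠ 0))).image σ := by
      intro k' hk'
      have hk'' : w k' ≠ 0 := (Finset.mem_filter.1 hk').2
      obtain ⟨p, hp, hpne⟩ := Finset.exists_ne_zero_of_sum_ne_zero hk''
      have hup : u p.1 ≠ 0 := fun h => hpne (by rw [h, zero_mul, zero_mul])
      have hup' : u' p.2 ≠ 0 := fun h => hpne (by rw [h, mul_zero, zero_mul])
      refine Finset.mem_image.2 ⟨p, Finset.mem_product.2
        ⟨Finset.mem_filter.2 ⟨Finset.mem_univ _, hup⟩,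
         Finset.mem_filter.2 ⟨Finset.mem_univ _, hup'⟩⟩, ?_⟩
      exact (Finset.mem_filter.1 hp).2
    calc hammingNorm w ≤ _ := Finset.card_le_card hsub
      _ ≤ _ := Finset.card_image_le
      _ = hammingNorm u * hammingNorm u' := Finset.card_product _ _
  refine ⟨w, hwE, hw0, ?_⟩
  calc hammingNorm w ≤ hammingNorm u * hammingNorm u' := hwt2
    _ ≤ hammingNorm u * hammingNorm u := Nat.mul_le_mul_left _ hwt1
    _ = hammingNorm u ^ 2 := (sq _).symm
end

section
/- Let n = 3^i · n₁ with n₁ > 1 odd, i ≥ 1, and suppose gcd(n₁, 2^(2j-1)+1) = 1 for every integer j with 1 ≤ j ≤ r, where r is the multiplicative order of 4 modulo n. Then for s ∈ Z/nZ, the 4-cyclotomic coset Z(s) modulo n is fixed by the multiplier μ_{-2} (i.e., -2s ≡ 4^k s (mod n) for some k) if and only if n₁ divides s. -/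
private lemma aux3int (t : ℕ) : (3:ℤ)^(t+1) ∣ 2^(3^t) + 1 := by
  induction t with
  | zero => norm_num
  | succ t ih =>
    set x : ℤ := 2^(3^t) with hx
    have h3 : (3:ℤ) ∣ x + 1 := dvd_trans (dvd_pow_self 3 (Nat.succ_ne_zero t)) ih
    obtain ⟨d, hd⟩ := h3
    have hfac : (2:ℤ)^(3^(t+1)) + 1 = (x + 1) * (x^2 - x + 1) := by
      rw [hx, pow_succ, pow_mul]; ring
    have h2 : (3:ℤ) ∣ x^2 - x + 1 := ⟨3*d^2 - 3*d + 1, by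
      have : x = 3*d - 1 := by omega
      rw [this]; ring⟩
    rw [hfac, pow_succ]
    exact mul_dvd_mul ih h2

private lemma aux3nat (t : ℕ) : (3:ℕ)^(t+1) ∣ 2^(3^t) + 1 := by
  have := aux3int t
  have h : ((3:ℕ)^(t+1) : ℤ) ∣ ((2^(3^t) + 1 : ℕ) : ℤ) := by push_cast; exact this
  exact_mod_cast h

/-- Key lemma for Corollary 3.6/3.9: for `n = 3^i·n₁` with `n₁ > 1` odd, `i ≥ 1`, and
`gcd(n₁, 2^(2j-1)+1) = 1` for all `1 ≤ j ≤ r = ord_n(4)`, the coset `Z(s)` modulo `n` is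
fixed by `μ₋₂` iff `n₁ ∣ s`. -/
theorem coset_fixed_iff_dvd (i n₁ n r : ℕ) [NeZero n] (hi : 1 ≤ i) (h1 : 1 < n₁)
    (hodd : Odd n₁) (hn : n = 3 ^ i * n₁) (hr : r = orderOf (4 : ZMod n))
    (hgcd : ∀ j, 1 ≤ j → j ≤ r → Nat.gcd n₁ (2 ^ (2 * j - 1) + 1) = 1)
    (s : ZMod n) :
    (∃ k : ℕ, -2 * s = 4 ^ k * s) ↔ n₁ ∣ s.val := by
  have hnodd : Odd n := by
    rw [hn]; exact (Odd.pow (by decide : Odd (3:ℕ))).mul hodd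
  have hn₁dvd : n₁ ∣ n := ⟨3^i, by rw [hn]; ring⟩
  have hcop4 : Nat.Coprime 4 n := Nat.Coprime.pow_left 2 hnodd.coprime_two_left
  have hr0 : 0 < r := by
    rw [hr]
    have hu : ((ZMod.unitOfCoprime 4 hcop4 : (ZMod n)ˣ) : ZMod n) = (4 : ZMod n) := by
      rw [ZMod.coe_unitOfCoprime]; norm_num
    rw [← hu, orderOf_units]
    exact orderOf_pos _
  have key : ∀ a : ℕ, ((a : ZMod n) * s = 0 ↔ n ∣ a * s.val) := by
    intro a
    rw [show (a : ZMod n) * s = ((a * s.val : ℕ) : ZMod n) by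
      push_cast [ZMod.natCast_val, ZMod.cast_id]
      ring]
    exact ZMod.natCast_eq_zero_iff _ _
  constructor
  · rintro ⟨k, hk⟩
    have hks : ((4^k + 2 : ℕ) : ZMod n) * s = 0 := by
      push_cast; linear_combination -hk
    have h4 : (4:ZMod n)^(k % r) = 4^k := by rw [hr]; exact pow_mod_orderOf 4 k
    by_cases hj : k % r = 0
    · rw [hj, pow_zero] at h4
      rw [← h4, one_mul] at hk
      have h1' : ((3:ℕ) : ZMod n) * s = 0 := by push_cast; linear_combination -hk
      have hd : n₁ ∣ 3 * s.val := hn₁dvd.trans ((key 3).mp h1')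
      have hc3 : Nat.Coprime n₁ 3 := by simpa using hgcd 1 le_rfl hr0
      exact hc3.dvd_of_dvd_mul_left hd
    · obtain ⟨j, h4, hj1, hjr⟩ : ∃ j, (4:ZMod n)^j = 4^k ∧ 1 ≤ j ∧ j ≤ r :=
        ⟨k % r, h4, Nat.one_le_iff_ne_zero.mpr hj, le_of_lt (Nat.mod_lt _ hr0)⟩
      have hks' : ((4^j + 2 : ℕ) : ZMod n) * s = 0 := by
        push_cast
        rw [h4]
        push_cast at hks
        exact hks
      have hd : n₁ ∣ (4^j + 2) * s.val := hn₁dvd.trans ((key _).mp hks')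
      have heq : 4^j + 2 = 2 * (2^(2*j - 1) + 1) := by
        obtain ⟨j', rfl⟩ : ∃ j', j = j' + 1 := ⟨j - 1, by omega⟩
        rw [show 2*(j'+1) - 1 = 2*j' + 1 from by omega,
          show (4:ℕ) = 2^2 from rfl, ← pow_mul,
          show 2*(j'+1) = (2*j'+1)+1 from by ring, pow_succ]
        ring
      have hcop : Nat.Coprime n₁ (4^j + 2) := by
        rw [heq]
        exact Nat.Coprime.mul_right hodd.coprime_two_right (hgcd j hj1 hjr)
      exact hcop.dvd_of_dvd_mul_left hd
  · intro hdvd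
    obtain ⟨i', rfl⟩ : ∃ i', i = i' + 1 := ⟨i - 1, by omega⟩
    obtain ⟨b, hb⟩ : Odd (3^i' : ℕ) := Odd.pow (by decide : Odd (3:ℕ))
    refine ⟨b + 1, ?_⟩
    have h2 : (4:ℕ)^(b+1) + 2 = 2 * (2^(3^i') + 1) := by
      rw [hb, show (4:ℕ) = 2^2 from rfl, ← pow_mul,
        show 2*(b+1) = (2*b+1)+1 from by ring, pow_succ]
      ring
    have h3 : (3:ℕ)^(i'+1) ∣ 4^(b+1) + 2 := by
      rw [h2]; exact (aux3nat i').mul_left 2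
    have hns : n ∣ (4^(b+1) + 2) * s.val := by
      exact (dvd_of_eq hn).trans (mul_dvd_mul h3 hdvd)
    have h0 : ((4^(b+1) + 2 : ℕ) : ZMod n) * s = 0 := (key _).mpr hns
    push_cast at h0
    linear_combination -h0
end
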